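/- For every n ≥ 1, the difference of consecutive block densities satisfies d_{n+1} − d_n = (δ_n − d_n)·(1 − 2·d_n) / (3 − 2·d_n), where d_n = c_n/L_n and δ_n = o_n/m_n are real numbers. -/

import Mathlib

/-- Generation operator: expand a run-length vector `R` starting with symbol `s`,
alternating between `s` and `4 - s` from run to run. -/
def G : List ℕ → ℕ → List ℕ
  | [], _ => []
  | r :: rs, s => List.replicate r s ++ G rs (4 - s)

/-- Pillar sequences: `P 1 = [3]`, `P (n+1) = G (P n) 3` for `n ≥ 1`. -/
def P : ℕ → List ℕ
  | 0 => []
  | 1 => [3]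
  | n + 2 => G (P (n + 1)) 3

/-- Block sequences: `B 1 = G [1,3,3,3,1] 1`, `B (n+1) = B n ++ P n ++ B n` for `n ≥ 1`. -/
def B : ℕ → List ℕ
  | 0 => []
  | 1 => G [1, 3, 3, 3, 1] 1
  | n + 2 => B (n + 1) ++ P (n + 1) ++ B (n + 1)

/-!
Passing from `B n` to `B (n+1) = B n ++ P n ++ B n` gives `L (n+1) = 2 L n + m n` and
`c (n+1) = 2 c n + o n`, while `P (n+1) = G (P n) 3` has length `Σ P n = 3 m n - 2 o n` because
`P n` is a word over `{1, 3}`. These recursions preserve the invariant `L n = m n + 2 c n`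
(true for `n = 1`: `11 = 1 + 2 * 5`), and under this invariant the claimed formula is an identity
of rational functions in `c n`, `o n`, `m n`.
-/

lemma length_G (R : List ℕ) (s : ℕ) : (G R s).length = R.sum := by
  induction R generalizing s with
  | nil => rfl
  | cons r rs ih => simp [G, ih]

lemma eq_one_or_three_of_mem_G {R : List ℕ} {s : ℕ} (hs : s = 1 ∨ s = 3) :
    ∀ x ∈ G R s, x = 1 ∨ x = 3 := by
  induction R generalizing s with
  | nil => simp [G]
  | cons r rs ih =>
    intro x hx
    rcases List.mem_append.mp hx with h | h
    · exact (List.eq_of_mem_replicate h).symm ▸ hs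
    · exact ih (by omega) x h

lemma sum_add_two_mul_count_one {l : List ℕ} (h : ∀ x ∈ l, x = 1 ∨ x = 3) :
    l.sum + 2 * l.count 1 = 3 * l.length := by
  induction l with
  | nil => rfl
  | cons a l ih =>
    have ih' := ih fun x hx => h x (List.mem_cons_of_mem a hx)
    rcases h a List.mem_cons_self with rfl | rfl <;>
      simp <;> omega

lemma P_succ {n : ℕ} (hn : n ≠ 0) : P (n + 1) = G (P n) 3 := by
  obtain ⟨k, rfl⟩ := Nat.exists_eq_succ_of_ne_zero hn
  rfl

lemma B_succ {n : ℕ} (hn : n ≠ 0) : B (n + 1) = B n ++ P n ++ B n := by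
  obtain ⟨k, rfl⟩ := Nat.exists_eq_succ_of_ne_zero hn
  rfl

lemma eq_one_or_three_of_mem_P : ∀ {n : ℕ}, ∀ x ∈ P n, x = 1 ∨ x = 3
  | 0 => by simp [P]
  | 1 => by simp [P]
  | _ + 2 => eq_one_or_three_of_mem_G (Or.inr rfl)

lemma length_P_succ {n : ℕ} (hn : n ≠ 0) :
    (P (n + 1)).length + 2 * (P n).count 1 = 3 * (P n).length := by
  rw [P_succ hn, length_G]
  exact sum_add_two_mul_count_one eq_one_or_three_of_mem_P

lemma length_P_pos {n : ℕ} (hn : 1 ≤ n) : 0 < (P n).length := by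
  induction n, hn using Nat.le_induction with
  | base => simp [P]
  | succ n hn ih =>
    have := length_P_succ (n := n) (by omega)
    have := List.count_le_length (l := P n) (a := 1)
    omega

lemma length_B_eq_length_P_add_two_mul_count {n : ℕ} (hn : 1 ≤ n) :
    (B n).length = (P n).length + 2 * (B n).count 1 := by
  induction n, hn using Nat.le_induction with
  | base => decide
  | succ n hn ih =>
    have := length_P_succ (n := n) (by omega)
    simp only [B_succ (n := n) (by omega), List.length_append, List.count_append]
    omega

lemma density_step {c o m L : ℝ} (hc : 0 ≤ c) (hm : 0 < m) (hL : L = m + 2 * c) :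
    (2 * c + o) / (2 * L + m) - c / L =
      (o / m - c / L) * (1 - 2 * (c / L)) / (3 - 2 * (c / L)) := by
  subst hL
  have hpos : 0 < m + 2 * c := by linarith
  have hden : 3 - 2 * (c / (m + 2 * c)) = (2 * (m + 2 * c) + m) / (m + 2 * c) := by
    field_simp
    ring
  rw [hden]
  field_simp
  ring

/-- For every `n ≥ 1`, the consecutive block densities satisfy
`d (n+1) − d n = (δ n − d n)(1 − 2 d n) / (3 − 2 d n)`. -/
theorem density_difference :
    ∀ n : ℕ, 1 ≤ n →
      ((B (n + 1)).count 1 : ℝ) / ((B (n + 1)).length : ℝ) -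
        ((B n).count 1 : ℝ) / ((B n).length : ℝ) =
      ((((P n).count 1 : ℝ) / ((P n).length : ℝ)) -
          ((B n).count 1 : ℝ) / ((B n).length : ℝ)) *
        (1 - 2 * (((B n).count 1 : ℝ) / ((B n).length : ℝ))) /
        (3 - 2 * (((B n).count 1 : ℝ) / ((B n).length : ℝ))) := by
  intro n hn
  have hB := B_succ (n := n) (by omega)
  have hcount : ((B (n + 1)).count 1 : ℝ) = 2 * (B n).count 1 + (P n).count 1 := by
    rw [hB]; push_cast [List.count_append]; ring
  have hlength : ((B (n + 1)).length : ℝ) = 2 * (B n).length + (P n).length := by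
    rw [hB]; push_cast [List.length_append]; ring
  rw [hcount, hlength]
  exact density_step (Nat.cast_nonneg _) (by exact_mod_cast length_P_pos hn)
    (by exact_mod_cast length_B_eq_length_P_add_two_mul_count hn)
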